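/- For a linear additive model f(x) = Σ_{i∈N} w_i u_i(x_i) with positive weights summing to 1 and each u_i attaining both 0 and 1, and for any baseline φ₀ ∈ ℝ, any instance x, any nonempty I ⊆ N, and any i ∈ I, the Contextual influence of feature i equals φ_{{i},I}(x) = w_i·(u_i(x_i) − φ₀)/(Σ_{k∈I} w_k); in particular, with I = N it equals w_i·(u_i(x_i) − φ₀). -/

import Mathlib

set_option linter.unusedSectionVars false

open Finset

variable {N : Type*} [Fintype N] [DecidableEq N]
variable {X : N → Type*} [∀ i, Fintype (X i)] [∀ i, DecidableEq (X i)] [∀ i, Nonempty (X i)]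

/-- The instances that agree with `x` on every feature outside `S`. -/
def varies (x : ∀ i, X i) (S : Finset N) : Finset (∀ i, X i) :=
  Finset.univ.filter (fun y => ∀ j ∉ S, y j = x j)

theorem varies_nonempty (x : ∀ i, X i) (S : Finset N) : (varies x S).Nonempty :=
  ⟨x, by simp [varies]⟩

/-- `ymin_S(x)`: the minimum of `f` over all instances agreeing with `x` outside `S`. -/
noncomputable def ymin (f : (∀ i, X i) → ℝ) (x : ∀ i, X i) (S : Finset N) : ℝ :=
  (varies x S).inf' (varies_nonempty x S) f

/-- `ymax_S(x)`: the maximum of `f` over all instances agreeing with `x` outside `S`. -/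
noncomputable def ymax (f : (∀ i, X i) → ℝ) (x : ∀ i, X i) (S : Finset N) : ℝ :=
  (varies x S).sup' (varies_nonempty x S) f

/-- Contextual Importance `ω_{S,I}(x)`. -/
noncomputable def CI (f : (∀ i, X i) → ℝ) (x : ∀ i, X i) (S I : Finset N) : ℝ :=
  (ymax f x S - ymin f x S) / (ymax f x I - ymin f x I)

/-- Contextual Utility `CU_S(x)`. -/
noncomputable def CU (f : (∀ i, X i) → ℝ) (x : ∀ i, X i) (S : Finset N) : ℝ :=
  (f x - ymin f x S) / (ymax f x S - ymin f x S)

/-- Contextual influence `φ_{S,I}(x) = ω_{S,I}(x)·(CU_S(x) − φ₀)`. -/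
noncomputable def Cinfl (f : (∀ i, X i) → ℝ) (x : ∀ i, X i) (S I : Finset N) (φ₀ : ℝ) : ℝ :=
  CI f x S I * (CU f x S - φ₀)

/-! For an additive model `f y = ∑ k, g k (y k)` the instances agreeing with `x` outside `S`
form a product, so `ymin_S(x)` and `ymax_S(x)` split feature by feature: each feature in `S`
contributes its extreme value and each feature outside `S` its value at `x`. For the linear model
the extremes of `w k * u k` are `0` and `w k`, giving `ω_{{i},I}(x) = w i / ∑_{k∈I} w k` and
`CU_{{i}}(x) = u i (x i)`. -/

section Additive

variable {g : ∀ k, X k → ℝ} {f : (∀ k, X k) → ℝ}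

theorem mem_varies_self (x : ∀ k, X k) (S : Finset N) : x ∈ varies x S := by
  simp [varies]

theorem piecewise_mem_varies (z x : ∀ k, X k) (S : Finset N) : S.piecewise z x ∈ varies x S := by
  simp only [varies, mem_filter, mem_univ, true_and]
  exact fun j hj => S.piecewise_eq_of_notMem z x hj

theorem sum_eq_of_mem_varies {x y : ∀ k, X k} {S : Finset N} (hy : y ∈ varies x S) :
    ∑ k, g k (y k) = ∑ k ∈ S, g k (y k) + ∑ k ∈ Sᶜ, g k (x k) := by
  rw [← sum_add_sum_compl S]
  congr 1
  exact sum_congr rfl fun k hk => by rw [(mem_filter.1 hy).2 k (mem_compl.1 hk)]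

theorem sum_eq_of_piecewise (z x : ∀ k, X k) (S : Finset N) :
    ∑ k, g k (S.piecewise z x k) = ∑ k ∈ S, g k (z k) + ∑ k ∈ Sᶜ, g k (x k) := by
  rw [sum_eq_of_mem_varies (piecewise_mem_varies z x S)]
  congr 1
  exact sum_congr rfl fun k hk => by rw [S.piecewise_eq_of_mem z x hk]

theorem ymin_eq_of_additive (hf : ∀ y, f y = ∑ k, g k (y k)) (x : ∀ k, X k) (S : Finset N) :
    ymin f x S = ∑ k ∈ S, univ.inf' univ_nonempty (g k) + ∑ k ∈ Sᶜ, g k (x k) := by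
  choose t _ ht using fun k => exists_mem_eq_inf' univ_nonempty (g k)
  apply le_antisymm
  · calc ymin f x S ≤ f (S.piecewise t x) := inf'_le f (piecewise_mem_varies t x S)
      _ = _ := by rw [hf, sum_eq_of_piecewise, sum_congr rfl fun k _ => ht k]
  · refine le_inf' _ _ fun y hy => ?_
    rw [hf, sum_eq_of_mem_varies hy]
    gcongr with k
    exact inf'_le _ (mem_univ _)

theorem ymax_eq_of_additive (hf : ∀ y, f y = ∑ k, g k (y k)) (x : ∀ k, X k) (S : Finset N) :
    ymax f x S = ∑ k ∈ S, univ.sup' univ_nonempty (g k) + ∑ k ∈ Sᶜ, g k (x k) := by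
  choose t _ ht using fun k => exists_mem_eq_sup' univ_nonempty (g k)
  apply le_antisymm
  · refine sup'_le _ _ fun y hy => ?_
    rw [hf, sum_eq_of_mem_varies hy]
    gcongr with k
    exact le_sup' _ (mem_univ _)
  · calc _ = f (S.piecewise t x) := by rw [hf, sum_eq_of_piecewise, sum_congr rfl fun k _ => ht k]
      _ ≤ ymax f x S := le_sup' f (piecewise_mem_varies t x S)

theorem ymax_sub_ymin_of_additive (hf : ∀ y, f y = ∑ k, g k (y k)) (x : ∀ k, X k)
    (S : Finset N) :
    ymax f x S - ymin f x S =
      ∑ k ∈ S, (univ.sup' univ_nonempty (g k) - univ.inf' univ_nonempty (g k)) := by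
  rw [ymax_eq_of_additive hf, ymin_eq_of_additive hf, sum_sub_distrib]
  ring

theorem CI_singleton_of_additive (hf : ∀ y, f y = ∑ k, g k (y k)) (x : ∀ k, X k) (i : N)
    (I : Finset N) :
    CI f x {i} I = (univ.sup' univ_nonempty (g i) - univ.inf' univ_nonempty (g i)) /
      ∑ k ∈ I, (univ.sup' univ_nonempty (g k) - univ.inf' univ_nonempty (g k)) := by
  rw [CI, ymax_sub_ymin_of_additive hf, ymax_sub_ymin_of_additive hf, sum_singleton]

theorem CU_singleton_of_additive (hf : ∀ y, f y = ∑ k, g k (y k)) (x : ∀ k, X k) (i : N) :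
    CU f x {i} = (g i (x i) - univ.inf' univ_nonempty (g i)) /
      (univ.sup' univ_nonempty (g i) - univ.inf' univ_nonempty (g i)) := by
  have hfx : f x - ymin f x {i} = g i (x i) - univ.inf' univ_nonempty (g i) := by
    rw [ymin_eq_of_additive hf, hf, sum_eq_of_mem_varies (mem_varies_self x {i}), sum_singleton,
      sum_singleton]
    ring
  rw [CU, hfx, ymax_sub_ymin_of_additive hf, sum_singleton]

end Additive

section Scaled

variable {α : Type*} [Fintype α] [Nonempty α] {c : ℝ} {v : α → ℝ}

theorem inf'_const_mul_eq_zero (hc : 0 ≤ c) (hv : ∀ t, 0 ≤ v t) (hv0 : ∃ t, v t = 0) :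
    univ.inf' univ_nonempty (fun t => c * v t) = 0 := by
  obtain ⟨t₀, ht₀⟩ := hv0
  refine le_antisymm ?_ (le_inf' _ _ fun t _ => mul_nonneg hc (hv t))
  exact (inf'_le _ (mem_univ t₀)).trans_eq (by rw [ht₀, mul_zero])

theorem sup'_const_mul_eq (hc : 0 ≤ c) (hv : ∀ t, v t ≤ 1) (hv1 : ∃ t, v t = 1) :
    univ.sup' univ_nonempty (fun t => c * v t) = c := by
  obtain ⟨t₁, ht₁⟩ := hv1
  refine le_antisymm (sup'_le _ _ fun t _ => mul_le_of_le_one_right hc (hv t)) ?_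
  exact (le_sup' (fun t => c * v t) (mem_univ t₁)).trans_eq' (by rw [ht₁, mul_one])

end Scaled

theorem Cinfl_eq_general
    (w : N → ℝ) (u : ∀ i, X i → ℝ) (f : (∀ i, X i) → ℝ)
    (hw : ∀ i, 0 < w i) (hwsum : ∑ i, w i = 1)
    (hu01 : ∀ i t, u i t ∈ Set.Icc (0 : ℝ) 1)
    (hu0 : ∀ i, ∃ t, u i t = 0) (hu1 : ∀ i, ∃ t, u i t = 1)
    (hf : ∀ y, f y = ∑ i, w i * u i (y i))
    (φ₀ : ℝ) (x : ∀ i, X i) (I : Finset N) (i : N) :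
    Cinfl f x {i} I φ₀ = w i * (u i (x i) - φ₀) / (∑ k ∈ I, w k) ∧
    Cinfl f x {i} Finset.univ φ₀ = w i * (u i (x i) - φ₀) := by
  have hinf k : univ.inf' univ_nonempty (fun t => w k * u k t) = 0 :=
    inf'_const_mul_eq_zero (hw k).le (fun t => (hu01 k t).1) (hu0 k)
  have hsup k : univ.sup' univ_nonempty (fun t => w k * u k t) = w k :=
    sup'_const_mul_eq (hw k).le (fun t => (hu01 k t).2) (hu1 k)
  have hCI J : CI f x {i} J = w i / ∑ k ∈ J, w k := by
    simp only [CI_singleton_of_additive (g := fun k t => w k * u k t) hf, hinf, hsup, sub_zero]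
  have hCU : CU f x {i} = u i (x i) := by
    rw [CU_singleton_of_additive (g := fun k t => w k * u k t) hf, hinf, hsup, sub_zero, sub_zero,
      mul_div_cancel_left₀ _ (hw i).ne']
  refine ⟨?_, ?_⟩ <;> rw [Cinfl, hCI, hCU]
  · ring
  · rw [hwsum, div_one]

/-- For a linear additive model, the Contextual influence of a feature `i` equals
`w i · (u i (x i) − φ₀) / (Σ_{k∈I} w k)`; in particular with `I = N` it is
`w i · (u i (x i) − φ₀)`. -/
theorem Cinfl_eq
    (w : N → ℝ) (u : ∀ i, X i → ℝ) (f : (∀ i, X i) → ℝ)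
    (hw : ∀ i, 0 < w i) (hwsum : ∑ i, w i = 1)
    (hu01 : ∀ i t, u i t ∈ Set.Icc (0 : ℝ) 1)
    (hu0 : ∀ i, ∃ t, u i t = 0) (hu1 : ∀ i, ∃ t, u i t = 1)
    (hf : ∀ y, f y = ∑ i, w i * u i (y i))
    (φ₀ : ℝ) (x : ∀ i, X i) (I : Finset N) (hI : I.Nonempty) (i : N) (hi : i ∈ I) :
    Cinfl f x {i} I φ₀ = w i * (u i (x i) - φ₀) / (∑ k ∈ I, w k) ∧
    Cinfl f x {i} Finset.univ φ₀ = w i * (u i (x i) - φ₀) :=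
  Cinfl_eq_general w u f hw hwsum hu01 hu0 hu1 hf φ₀ x I i
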